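/- arXiv:2603.11173 — 6 statements merged into one kernel-verified Lean document; each statement's English description precedes it below -/
import Mathlib

section
/- Let ι be a finite nonempty index set and let x, y : ι → ℤ. Define g : ℝ → ℝ by g(t) = minᵢ∈ι ((1−t)·xᵢ + t·yᵢ). Suppose g(0) < 0 and g(1) > 0. Then there exists a unique s ∈ (0,1) with g(s) = 0, and this s is a rational number. -/
/-!
Each `t ↦ (1 - t) * xᵢ + t * yᵢ` is affine, so `g` is continuous and concave; the intermediate
value theorem gives a zero in `(0, 1)`. Concavity and `g 1 > 0` rule out a second one: between two
zeros `s₁ < s₂ < 1`, concavity forces `g s₁ < g s₂`. At a zero `s`, some affine piece attains the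
minimum, so `(1 - s) * xᵢ + s * yᵢ = 0` with `yᵢ ≥ g 1 > 0`, whence `s = xᵢ / (xᵢ - yᵢ)`.
-/

open Set

theorem ConcaveOn.finset_inf' {𝕜 E β ι : Type*} [Semiring 𝕜] [PartialOrder 𝕜] [AddCommMonoid E]
    [AddCommMonoid β] [LinearOrder β] [IsOrderedAddMonoid β] [SMul 𝕜 E] [Module 𝕜 β]
    [PosSMulStrictMono 𝕜 β] {S : Set E} {s : Finset ι} (hs : s.Nonempty) {f : ι → E → β}
    (hf : ∀ i ∈ s, ConcaveOn 𝕜 S (f i)) : ConcaveOn 𝕜 S (s.inf' hs f) :=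
  Finset.inf'_induction hs f (fun _ h₁ _ h₂ ↦ h₁.inf h₂) hf

theorem concaveOn_univ_one_sub_mul_add_mul (a b : ℝ) :
    ConcaveOn ℝ univ fun t : ℝ ↦ (1 - t) * a + t * b :=
  ⟨convex_univ, fun u _ v _ p q _ _ hpq ↦ le_of_eq <| by
    simp only [smul_eq_mul]; linear_combination a * hpq⟩

theorem ConcaveOn.eq_of_apply_eq_zero {S : Set ℝ} {f : ℝ → ℝ} (hf : ConcaveOn ℝ S f) {b : ℝ}
    (hb : b ∈ S) (hfb : 0 < f b) {s₁ s₂ : ℝ} (hs₁ : s₁ ∈ S) (hs₂ : s₂ ∈ S) (h₁ : s₁ < b)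
    (h₂ : s₂ < b) (hf₁ : f s₁ = 0) (hf₂ : f s₂ = 0) : s₁ = s₂ := by
  wlog h : s₁ ≤ s₂ generalizing s₁ s₂
  · exact (this hs₂ hs₁ h₂ h₁ hf₂ hf₁ (le_of_not_ge h)).symm
  obtain hlt | rfl := h.lt_or_eq
  · have hmem : s₂ ∈ openSegment ℝ s₁ b := by
      rw [openSegment_eq_Ioo (hlt.trans h₂)]
      exact ⟨hlt, h₂⟩
    have hf_lt : f s₁ < f s₂ := hf.left_lt_of_lt_right hs₁ hb hmem (hf₂ ▸ hfb)
    linarith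
  · rfl

theorem exists_rat_eq_of_affine_eq_zero {a b : ℚ} (hb : b ≠ 0) {s : ℝ}
    (hs : (1 - s) * a + s * b = 0) : ∃ q : ℚ, (q : ℝ) = s := by
  have hab : (a : ℝ) - b ≠ 0 := by
    intro h
    obtain rfl : a = b := by exact_mod_cast sub_eq_zero.1 h
    exact hb (by exact_mod_cast (by linear_combination hs : (a : ℝ) = 0))
  exact ⟨a / (a - b), by push_cast; rw [div_eq_iff hab]; linear_combination hs⟩

/-- For a minimum `g(t) = minᵢ ((1−t)·xᵢ + t·yᵢ)` of finitely many affine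
functions with integer values at `t = 0` and `t = 1`, if `g(0) < 0` and `g(1) > 0` then
`g` has a unique zero `s` in `(0,1)`, and this zero is rational. -/
theorem min_affine_unique_rational_zero
    {ι : Type*} [Fintype ι] [Nonempty ι] (x y : ι → ℤ) (g : ℝ → ℝ)
    (hg : ∀ t : ℝ, g t =
      Finset.univ.inf' Finset.univ_nonempty (fun i => (1 - t) * (x i : ℝ) + t * (y i : ℝ)))
    (h0 : g 0 < 0) (h1 : 0 < g 1) :
    (∃! s : ℝ, s ∈ Set.Ioo (0 : ℝ) 1 ∧ g s = 0) ∧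
    (∀ s : ℝ, s ∈ Set.Ioo (0 : ℝ) 1 → g s = 0 → ∃ q : ℚ, (q : ℝ) = s) := by
  set f : ι → ℝ → ℝ := fun i t ↦ (1 - t) * (x i : ℝ) + t * (y i : ℝ)
  have hgf : g = Finset.univ.inf' Finset.univ_nonempty f :=
    funext fun t ↦ by rw [hg, Finset.inf'_apply]
  have hconc : ConcaveOn ℝ univ g :=
    hgf ▸ ConcaveOn.finset_inf' _ fun i _ ↦ concaveOn_univ_one_sub_mul_add_mul (x i) (y i)
  have hcont : Continuous g := hgf ▸ Continuous.finset_inf' _ fun i _ ↦ by fun_prop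
  have hy : ∀ i, g 1 ≤ y i := fun i ↦
    hgf ▸ (Finset.inf'_le f (Finset.mem_univ i) 1).trans_eq (by simp [f])
  have huniq : ∀ s₁ ∈ Ioo (0 : ℝ) 1, ∀ s₂ ∈ Ioo (0 : ℝ) 1, g s₁ = 0 → g s₂ = 0 → s₁ = s₂ :=
    fun s₁ hs₁ s₂ hs₂ ↦ hconc.eq_of_apply_eq_zero trivial h1 trivial trivial hs₁.2 hs₂.2
  obtain ⟨s, hs, hgs⟩ := intermediate_value_Ioo zero_le_one hcont.continuousOn ⟨h0, h1⟩
  refine ⟨⟨s, ⟨hs, hgs⟩, fun t ht ↦ huniq t ht.1 s hs ht.2 hgs⟩, fun t _ hgt ↦ ?_⟩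
  obtain ⟨i, -, hi⟩ := Finset.exists_mem_eq_inf' Finset.univ_nonempty (f · t)
  have hfi : f i t = 0 := by rw [← hi, ← hg, hgt]
  exact exists_rat_eq_of_affine_eq_zero (a := x i) (b := y i)
    (by exact_mod_cast (h1.trans_le (hy i)).ne') (by exact_mod_cast hfi)
end

section
/- For natural numbers p and m, the vector (−p, p, m) ∈ ℤ³ is a non-negative integer combination of the vectors (1,0,0), (0,1,0), (1,1,0), (−2,2,1), (0,0,1) if and only if p is even and 2m ≥ p. -/
/-!
The first two coordinates of `(-p, p, m)` sum to zero, while every generator has a non-negative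
coordinate sum, zero only for `(-2, 2, 1)` and `(0, 0, 1)`. So only those two can occur, and
`(-p, p, m) = d • (-2, 2, 1) + e • (0, 0, 1)` forces `p = 2d` and `m = d + e ≥ d`.
-/

lemma combination_eq (a b c d e : ℕ) :
    a • ((1 : ℤ), (0 : ℤ), (0 : ℤ)) + b • ((0 : ℤ), (1 : ℤ), (0 : ℤ)) +
        c • ((1 : ℤ), (1 : ℤ), (0 : ℤ)) + d • ((-2 : ℤ), (2 : ℤ), (1 : ℤ)) +
        e • ((0 : ℤ), (0 : ℤ), (1 : ℤ)) =
      ((a + c - 2 * d : ℤ), (b + c + 2 * d : ℤ), (d + e : ℤ)) := by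
  simp only [Prod.smul_mk, Prod.mk_add_mk, nsmul_eq_mul, Prod.mk.injEq]
  refine ⟨?_, ?_, ?_⟩ <;> ring

/-- for natural numbers `p, m`, the vector `(−p, p, m) ∈ ℤ³` is a
non-negative integer combination of `(1,0,0), (0,1,0), (1,1,0), (−2,2,1), (0,0,1)`
iff `p` is even and `2m ≥ p`. -/
theorem boundary_holes_h11_3
    (p m : ℕ) :
    (∃ a b c d e : ℕ,
      ((-(p : ℤ)), (p : ℤ), (m : ℤ)) =
        a • ((1 : ℤ), (0 : ℤ), (0 : ℤ)) + b • ((0 : ℤ), (1 : ℤ), (0 : ℤ)) +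
        c • ((1 : ℤ), (1 : ℤ), (0 : ℤ)) + d • ((-2 : ℤ), (2 : ℤ), (1 : ℤ)) +
        e • ((0 : ℤ), (0 : ℤ), (1 : ℤ))) ↔
      (Even p ∧ p ≤ 2 * m) := by
  simp only [combination_eq, Prod.mk.injEq]
  constructor
  · rintro ⟨a, b, c, d, e, hx, hy, hz⟩
    have hp : p = 2 * d := by omega
    exact ⟨⟨d, by omega⟩, by omega⟩
  · rintro ⟨⟨d, hd⟩, hle⟩
    exact ⟨0, 0, 0, d, m - d, by omega, by omega, by omega⟩
end

section
/- A vector (x, y, z) ∈ ℤ³ is a non-negative integer combination of the five vectors (1,0,0), (0,1,0), (0,0,1), (−2,2,1), (−1,1,1) if and only if y ≥ 0, z ≥ 0, x + y ≥ 0, and x + 2z ≥ 0. Moreover, the vector (−1,1,1) is not a non-negative integer combination of the four vectors (1,0,0), (0,1,0), (0,0,1), (−2,2,1). -/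
/-!
Each of the five generators satisfies the four facet inequalities `y ≥ 0`, `z ≥ 0`,
`x + y ≥ 0`, `x + 2z ≥ 0`, hence so does every non-negative combination of them. Conversely,
a lattice point of the cone with `x ≥ 0` is a combination of the unit vectors, and one with
`x < 0` is reached by writing `-x = 2q + r` with `r ∈ {0, 1}` and taking `q` copies of
`(-2,2,1)` and `r` copies of `(-1,1,1)`. Finally `(-1,1,1)` is not a combination of the four ray
generators: `z = 1` allows at most one generator with non-zero last coordinate, `x = -1` forces
it to be `(-2,2,1)`, and then `y ≥ 2`.
-/

lemma five_combination_eq_iff (x y z : ℤ) (a b c d e : ℕ) :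
    (x, y, z) =
        a • ((1 : ℤ), (0 : ℤ), (0 : ℤ)) + b • ((0 : ℤ), (1 : ℤ), (0 : ℤ)) +
        c • ((0 : ℤ), (0 : ℤ), (1 : ℤ)) + d • ((-2 : ℤ), (2 : ℤ), (1 : ℤ)) +
        e • ((-1 : ℤ), (1 : ℤ), (1 : ℤ)) ↔
      x = a - 2 * d - e ∧ y = b + 2 * d + e ∧ z = c + d + e := by
  simp only [Prod.smul_mk, Prod.mk_add_mk, Prod.mk.injEq, nsmul_eq_mul]
  constructor <;> rintro ⟨hx, hy, hz⟩ <;> refine ⟨?_, ?_, ?_⟩ <;> linarith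

lemma four_combination_eq_iff (x y z : ℤ) (a b c d : ℕ) :
    (x, y, z) =
        a • ((1 : ℤ), (0 : ℤ), (0 : ℤ)) + b • ((0 : ℤ), (1 : ℤ), (0 : ℤ)) +
        c • ((0 : ℤ), (0 : ℤ), (1 : ℤ)) + d • ((-2 : ℤ), (2 : ℤ), (1 : ℤ)) ↔
      x = a - 2 * d ∧ y = b + 2 * d ∧ z = c + d := by
  simp only [Prod.smul_mk, Prod.mk_add_mk, Prod.mk.injEq, nsmul_eq_mul]
  constructor <;> rintro ⟨hx, hy, hz⟩ <;> refine ⟨?_, ?_, ?_⟩ <;> linarith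

lemma exists_nat_coeffs_of_mem_cone {x y z : ℤ}
    (h : 0 ≤ y ∧ 0 ≤ z ∧ 0 ≤ x + y ∧ 0 ≤ x + 2 * z) :
    ∃ a b c d e : ℕ, x = a - 2 * d - e ∧ y = b + 2 * d + e ∧ z = c + d + e := by
  obtain ⟨hy, hz, hxy, hxz⟩ := h
  rcases le_or_gt 0 x with hx | hx
  · exact ⟨x.toNat, y.toNat, z.toNat, 0, 0, by omega⟩
  · obtain ⟨q, r, hr, hqr⟩ : ∃ q r : ℕ, r ≤ 1 ∧ -x = 2 * q + r :=
      ⟨(-x / 2).toNat, (-x % 2).toNat, by omega, by omega⟩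
    exact ⟨0, (x + y).toNat, (z - q - r).toNat, q, r, by omega⟩

/-- `(x,y,z) ∈ ℤ³` is a non-negative integer combination of
`(1,0,0), (0,1,0), (0,0,1), (−2,2,1), (−1,1,1)` iff `y ≥ 0`, `z ≥ 0`, `x + y ≥ 0` and
`x + 2z ≥ 0`; moreover `(−1,1,1)` is not a non-negative integer combination of the four
extremal ray generators `(1,0,0), (0,1,0), (0,0,1), (−2,2,1)`. -/
theorem hilbert_basis_V351 :
    (∀ x y z : ℤ,
      (∃ a b c d e : ℕ,
        (x, y, z) =
          a • ((1 : ℤ), (0 : ℤ), (0 : ℤ)) + b • ((0 : ℤ), (1 : ℤ), (0 : ℤ)) +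
          c • ((0 : ℤ), (0 : ℤ), (1 : ℤ)) + d • ((-2 : ℤ), (2 : ℤ), (1 : ℤ)) +
          e • ((-1 : ℤ), (1 : ℤ), (1 : ℤ))) ↔
        (0 ≤ y ∧ 0 ≤ z ∧ 0 ≤ x + y ∧ 0 ≤ x + 2 * z)) ∧
    ¬ ∃ a b c d : ℕ,
      ((-1 : ℤ), (1 : ℤ), (1 : ℤ)) =
        a • ((1 : ℤ), (0 : ℤ), (0 : ℤ)) + b • ((0 : ℤ), (1 : ℤ), (0 : ℤ)) +
        c • ((0 : ℤ), (0 : ℤ), (1 : ℤ)) + d • ((-2 : ℤ), (2 : ℤ), (1 : ℤ)) := by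
  refine ⟨fun x y z => ⟨?_, fun hcone => ?_⟩, ?_⟩
  · rintro ⟨a, b, c, d, e, h⟩
    rw [five_combination_eq_iff] at h
    omega
  · obtain ⟨a, b, c, d, e, hcoeffs⟩ := exists_nat_coeffs_of_mem_cone hcone
    exact ⟨a, b, c, d, e, (five_combination_eq_iff x y z a b c d e).2 hcoeffs⟩
  · rintro ⟨a, b, c, d, h⟩
    rw [four_combination_eq_iff] at h
    omega
end

section
/- For natural numbers n, m, l, the vector (3 + n + 6m, −1 − 2m, 1 + 2m + l) ∈ ℤ³ is a non-negative integer combination of the vectors (1,0,0), (3,1,1), (0,1,0), (6,−2,2), (0,0,1) if and only if n ≥ 3 and l ≥ 1. In particular, whenever l = 0, or n ∈ {0, 1, 2}, this vector is not a non-negative integer combination of the listed vectors. -/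
/-!
Writing a class as `a (1,0,0) + b (3,1,1) + c (0,1,0) + d (6,-2,2) + e (0,0,1)` and eliminating
`d` through the second coordinate `y = b + c - 2d` gives `x = a + 6b + 3c - 3y` and
`y + z = 2b + c + e`. When `y` is odd, `b + c` is odd, hence positive, so `x ≥ 3 - 3y` and
`y + z ≥ 1`; for odd `y ≤ 1` these bounds are attained with `b = 0`, `c = 1`. For the classes
`[D_{n,m,l}]`, where `y = -1 - 2m`, the bounds read `n ≥ 3` and `l ≥ 1`.
-/

/-- Effectivity on `V_{3,165}`: the generators are the classes of its prime toric divisors. -/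
def IsEffectiveClass (v : ℤ × ℤ × ℤ) : Prop :=
  ∃ a b c d e : ℕ,
    v = a • ((1 : ℤ), (0 : ℤ), (0 : ℤ)) + b • ((3 : ℤ), (1 : ℤ), (1 : ℤ)) +
      c • ((0 : ℤ), (1 : ℤ), (0 : ℤ)) + d • ((6 : ℤ), (-2 : ℤ), (2 : ℤ)) +
      e • ((0 : ℤ), (0 : ℤ), (1 : ℤ))

theorem isEffectiveClass_iff (x y z : ℤ) :
    IsEffectiveClass (x, y, z) ↔ ∃ a b c d e : ℕ,
      x = a + 3 * b + 6 * d ∧ y = b + c - 2 * d ∧ z = b + 2 * d + e := by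
  simp only [IsEffectiveClass, Prod.ext_iff, Prod.fst_add, Prod.snd_add, Prod.smul_mk,
    nsmul_eq_mul, mul_zero, mul_one, add_zero, zero_add]
  refine exists₅_congr fun a b c d e => and_congr ?_ (and_congr ?_ ?_) <;> constructor <;>
    intro h <;> linarith

theorem IsEffectiveClass.bounds_of_odd {x y z : ℤ} (h : IsEffectiveClass (x, y, z))
    (hy : Odd y) : 3 - 3 * y ≤ x ∧ 1 ≤ y + z := by
  obtain ⟨a, b, c, d, e, hx, rfl, rfl⟩ := (isEffectiveClass_iff x y z).mp h
  have hbc : 1 ≤ (b : ℤ) + c := by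
    obtain ⟨k, hk⟩ := hy
    omega
  omega

theorem isEffectiveClass_of_odd {x y z : ℤ} (hy : Odd y) (hy1 : y ≤ 1) (hx : 3 - 3 * y ≤ x)
    (hz : 1 ≤ y + z) : IsEffectiveClass (x, y, z) := by
  obtain ⟨k, rfl⟩ := hy
  obtain ⟨d, rfl⟩ : ∃ d : ℕ, k = -d := ⟨k.natAbs, by omega⟩
  obtain ⟨a, rfl⟩ : ∃ a : ℕ, x = a + 6 * d := ⟨(x - 6 * d).toNat, by omega⟩
  obtain ⟨e, rfl⟩ : ∃ e : ℕ, z = 2 * d + e := ⟨(z - 2 * d).toNat, by omega⟩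
  exact (isEffectiveClass_iff _ _ _).mpr ⟨a, 0, 1, d, e, by push_cast; omega⟩

theorem isEffectiveClass_iff_of_odd {x y z : ℤ} (hy : Odd y) (hy1 : y ≤ 1) :
    IsEffectiveClass (x, y, z) ↔ 3 - 3 * y ≤ x ∧ 1 ≤ y + z :=
  ⟨fun h => h.bounds_of_odd hy, fun ⟨hx, hz⟩ => isEffectiveClass_of_odd hy hy1 hx hz⟩

/-- for natural numbers `n, m, l`, the class
`(3 + n + 6m, −1 − 2m, 1 + 2m + l)` is a non-negative integer combination of the prime
toric divisor classes `(1,0,0), (3,1,1), (0,1,0), (6,−2,2), (0,0,1)` of `V_{3,165}` iff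
`n ≥ 3` and `l ≥ 1`; in particular, when `l = 0` or `n ∈ {0,1,2}` it is not such a
combination. -/
theorem holes_V3165
    (n m l : ℕ) :
    ((∃ a b c d e : ℕ,
      ((3 + n + 6 * m : ℤ), (-1 - 2 * m : ℤ), (1 + 2 * m + l : ℤ)) =
        a • ((1 : ℤ), (0 : ℤ), (0 : ℤ)) + b • ((3 : ℤ), (1 : ℤ), (1 : ℤ)) +
        c • ((0 : ℤ), (1 : ℤ), (0 : ℤ)) + d • ((6 : ℤ), (-2 : ℤ), (2 : ℤ)) +
        e • ((0 : ℤ), (0 : ℤ), (1 : ℤ))) ↔ (3 ≤ n ∧ 1 ≤ l)) ∧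
    ((l = 0 ∨ n = 0 ∨ n = 1 ∨ n = 2) →
      ¬ ∃ a b c d e : ℕ,
        ((3 + n + 6 * m : ℤ), (-1 - 2 * m : ℤ), (1 + 2 * m + l : ℤ)) =
          a • ((1 : ℤ), (0 : ℤ), (0 : ℤ)) + b • ((3 : ℤ), (1 : ℤ), (1 : ℤ)) +
          c • ((0 : ℤ), (1 : ℤ), (0 : ℤ)) + d • ((6 : ℤ), (-2 : ℤ), (2 : ℤ)) +
          e • ((0 : ℤ), (0 : ℤ), (1 : ℤ))) := by
  have hodd : Odd (-1 - 2 * (m : ℤ)) := ⟨-m - 1, by ring⟩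
  have key : IsEffectiveClass (3 + n + 6 * m, -1 - 2 * m, 1 + 2 * m + l) ↔ 3 ≤ n ∧ 1 ≤ l := by
    rw [isEffectiveClass_iff_of_odd hodd (by omega)]
    omega
  exact ⟨key, fun hhole heff => by have := key.mp heff; omega⟩
end

section
/- For all natural numbers n, m, ℓ, the vector (1 + m + ℓ, −2n + ℓ, −2 − m − 3ℓ, −1 + n − 2m − ℓ) ∈ ℤ⁴ is not a non-negative integer combination of the seven vectors (1,0,0,0), (0,1,0,0), (0,0,1,0), (0,0,0,1), (1,1,−3,−1), (0,−2,0,1), (1,0,−1,−2). -/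
/-! The class lies in the interior of the cone spanned by the generators, so no linear functional
rules it out; the obstruction is integral. In any solution, the first and third coordinates sum to
`2 a₅ = a₁ + a₃ + 2ℓ + 1`, and the first coordinate plus the second plus twice the fourth give
`3 a₇ = a₁ + a₂ + 2 a₄ + 3m + 1`. Rounding up, `a₅ ≥ ℓ + 1` and `a₇ ≥ m + 1`, which contradicts
the first coordinate `a₁ + a₅ + a₇ = 1 + m + ℓ`. -/

theorem V494.no_natural_solution_of_coordinates {n m ℓ a₁ a₂ a₃ a₄ a₅ a₆ a₇ : ℕ}
    (h₁ : (1 + m + ℓ : ℤ) = a₁ + a₅ + a₇)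
    (h₂ : (-2 * n + ℓ : ℤ) = a₂ + a₅ - 2 * a₆)
    (h₃ : (-2 - m - 3 * ℓ : ℤ) = a₃ - 3 * a₅ - a₇)
    (h₄ : (-1 + n - 2 * m - ℓ : ℤ) = a₄ - a₅ + a₆ - 2 * a₇) : False := by
  have cut₅ : 2 * (a₅ : ℤ) = a₁ + a₃ + 2 * ℓ + 1 := by linarith
  have cut₇ : 3 * (a₇ : ℤ) = a₁ + a₂ + 2 * a₄ + 3 * m + 1 := by linarith
  have ha₅ : ℓ + 1 ≤ a₅ := by omega
  have ha₇ : m + 1 ≤ a₇ := by omega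
  omega

/-- for all natural numbers `n, m, ℓ`, the class
`(1 + m + ℓ, −2n + ℓ, −2 − m − 3ℓ, −1 + n − 2m − ℓ) ∈ ℤ⁴` is not a non-negative integer
combination of the prime toric divisor classes of `V_{4,94}`:
`(1,0,0,0), (0,1,0,0), (0,0,1,0), (0,0,0,1), (1,1,−3,−1), (0,−2,0,1), (1,0,−1,−2)`. -/
theorem interior_holes_V494
    (n m ℓ : ℕ) :
    ¬ ∃ a₁ a₂ a₃ a₄ a₅ a₆ a₇ : ℕ,
      ((1 + m + ℓ : ℤ), (-2 * n + ℓ : ℤ), (-2 - m - 3 * ℓ : ℤ),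
        (-1 + n - 2 * m - ℓ : ℤ)) =
        a₁ • ((1 : ℤ), (0 : ℤ), (0 : ℤ), (0 : ℤ)) +
        a₂ • ((0 : ℤ), (1 : ℤ), (0 : ℤ), (0 : ℤ)) +
        a₃ • ((0 : ℤ), (0 : ℤ), (1 : ℤ), (0 : ℤ)) +
        a₄ • ((0 : ℤ), (0 : ℤ), (0 : ℤ), (1 : ℤ)) +
        a₅ • ((1 : ℤ), (1 : ℤ), (-3 : ℤ), (-1 : ℤ)) +
        a₆ • ((0 : ℤ), (-2 : ℤ), (0 : ℤ), (1 : ℤ)) +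
        a₇ • ((1 : ℤ), (0 : ℤ), (-1 : ℤ), (-2 : ℤ)) := by
  rintro ⟨a₁, a₂, a₃, a₄, a₅, a₆, a₇, h⟩
  simp only [Prod.ext_iff, Prod.fst_add, Prod.snd_add, Prod.smul_mk, nsmul_eq_mul, mul_zero,
    mul_one, add_zero, zero_add] at h
  obtain ⟨h₁, h₂, h₃, h₄⟩ := h
  exact V494.no_natural_solution_of_coordinates (n := n) (a₂ := a₂) (a₃ := a₃) (a₄ := a₄)
    (a₆ := a₆) h₁ (by linarith) (by linarith) (by linarith)
end

section
/- Consider the vector D = (1, 0, −2, −1) ∈ ℤ⁴ and the seven vectors w₁ = (1,0,0,0), w₂ = (0,1,0,0), w₃ = (0,0,1,0), w₄ = (0,0,0,1), w₅ = (1,1,−3,−1), w₆ = (0,−2,0,1), w₇ = (1,0,−1,−2). Then: (i) D is a non-negative rational combination of the wᵢ, namely D = ½·w₂ + ½·w₅ + ½·w₆ + ½·w₇; (ii) the double 2D = (2, 0, −4, −2) is a non-negative integer combination of the wᵢ, namely 2D = w₂ + w₅ + w₆ + w₇; but (iii) D itself is not a non-negative integer combination of the wᵢ. -/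
/-!
Only `w₁`, `w₅`, `w₇` have a non-zero first coordinate, each equal to `1`, so an integral
representation of `D` uses exactly one of them once. The third coordinate `-2` of `D` can only
be reached through `w₅`, and then the fourth coordinate forces `a₄ = a₆ = 0`, leaving the second
coordinate `a₂ + 1 = 0`, which has no solution in `ℕ`.
-/

lemma no_nat_solution_V494 (a₁ a₂ a₃ a₄ a₅ a₆ a₇ : ℕ)
    (h₁ : (a₁ : ℤ) + a₅ + a₇ = 1) (h₂ : (a₂ : ℤ) + a₅ - 2 * a₆ = 0)
    (h₃ : (a₃ : ℤ) - 3 * a₅ - a₇ = -2) (h₄ : (a₄ : ℤ) - a₅ + a₆ - 2 * a₇ = -1) : False := by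
  have h₅ : a₅ = 1 := by omega
  have h₇ : a₇ = 0 := by omega
  have h₆ : a₆ = 0 := by omega
  subst h₅ h₆ h₇
  omega

/-- the class `D = (1,0,−2,−1)` of `V_{4,94}` is (i) a non-negative
rational combination of the prime toric divisor classes, namely
`D = ½·w₂ + ½·w₅ + ½·w₆ + ½·w₇`; (ii) its double `2D = (2,0,−4,−2)` is a non-negative
integer combination, namely `2D = w₂ + w₅ + w₆ + w₇`; but (iii) `D` itself is not a
non-negative integer combination of the `wᵢ`: it is a hole. -/
theorem hole_V494 :
    -- (i) rational combination with coefficients 1/2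
    ((1 : ℚ), (0 : ℚ), (-2 : ℚ), (-1 : ℚ)) =
      (1 / 2 : ℚ) • ((0 : ℚ), (1 : ℚ), (0 : ℚ), (0 : ℚ)) +
      (1 / 2 : ℚ) • ((1 : ℚ), (1 : ℚ), (-3 : ℚ), (-1 : ℚ)) +
      (1 / 2 : ℚ) • ((0 : ℚ), (-2 : ℚ), (0 : ℚ), (1 : ℚ)) +
      (1 / 2 : ℚ) • ((1 : ℚ), (0 : ℚ), (-1 : ℚ), (-2 : ℚ)) ∧
    -- (ii) the double is an integer combination with coefficients 1
    ((2 : ℤ), (0 : ℤ), (-4 : ℤ), (-2 : ℤ)) =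
      ((0 : ℤ), (1 : ℤ), (0 : ℤ), (0 : ℤ)) +
      ((1 : ℤ), (1 : ℤ), (-3 : ℤ), (-1 : ℤ)) +
      ((0 : ℤ), (-2 : ℤ), (0 : ℤ), (1 : ℤ)) +
      ((1 : ℤ), (0 : ℤ), (-1 : ℤ), (-2 : ℤ)) ∧
    -- (iii) D itself is not a non-negative integer combination of w₁, …, w₇
    ¬ ∃ a₁ a₂ a₃ a₄ a₅ a₆ a₇ : ℕ,
      ((1 : ℤ), (0 : ℤ), (-2 : ℤ), (-1 : ℤ)) =
        a₁ • ((1 : ℤ), (0 : ℤ), (0 : ℤ), (0 : ℤ)) +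
        a₂ • ((0 : ℤ), (1 : ℤ), (0 : ℤ), (0 : ℤ)) +
        a₃ • ((0 : ℤ), (0 : ℤ), (1 : ℤ), (0 : ℤ)) +
        a₄ • ((0 : ℤ), (0 : ℤ), (0 : ℤ), (1 : ℤ)) +
        a₅ • ((1 : ℤ), (1 : ℤ), (-3 : ℤ), (-1 : ℤ)) +
        a₆ • ((0 : ℤ), (-2 : ℤ), (0 : ℤ), (1 : ℤ)) +
        a₇ • ((1 : ℤ), (0 : ℤ), (-1 : ℤ), (-2 : ℤ)) := by
  refine ⟨by norm_num [Prod.ext_iff], by norm_num [Prod.ext_iff], ?_⟩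
  rintro ⟨a₁, a₂, a₃, a₄, a₅, a₆, a₇, h⟩
  simp only [Prod.ext_iff, Prod.smul_mk, Prod.mk_add_mk, nsmul_eq_mul] at h
  obtain ⟨h₁, h₂, h₃, h₄⟩ := h
  exact no_nat_solution_V494 a₁ a₂ a₃ a₄ a₅ a₆ a₇
    (by linarith) (by linarith) (by linarith) (by linarith)
end
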